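/- Let L_1, …, L_n ∈ K_∞^{(m)}[x_1, …, x_n] be linear forms, L_i(x) = Σ_{j=1}^n λ_{ij} x_j, with symmetric coefficient matrix λ_{ij} = λ_{ji} ∈ K_∞^{(m)}. For integers a, b ≥ 1 define K_m(a, b) = #{x ∈ 𝒪_m^n : |x|_m < q^a and ‖L_i(x)‖_m < q^{-b} for all 1 ≤ i ≤ n}. Then for any integer r with 0 ≤ r < a ≤ b one has K_m(a, b) ≤ q^{(m+1)nr} · K_m(a − r, b + r). -/

import Mathlib

open Polynomial MeasureTheory
open scoped Classical

noncomputable section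

/-- `R[s]/(s^{m+1})`: we realise it as `AdjoinRoot (X^(m+1))`, whose root is `s`. -/
abbrev Amod (R : Type) [CommRing R] (m : ℕ) : Type :=
  AdjoinRoot ((X : Polynomial R) ^ (m + 1))

/-- `K_∞^{(m)} = K_∞[s]/(s^{m+1})`, modelled as formal Laurent series in `u = t⁻¹`
with coefficients in `F_q[s]/(s^{m+1})`. -/
abbrev Km (R : Type) [CommRing R] (m : ℕ) : Type := LaurentSeries (Amod R m)

namespace CircleMethod

/-- the canonical representative of degree `≤ m` of an element of `R[s]/(s^{m+1})` -/
def repA (R : Type) [CommRing R] (m : ℕ) (c : Amod R m) : Polynomial R :=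
  AdjoinRoot.modByMonicHom (monic_X_pow (m + 1)) c

/-- the `j`-th `s`-coefficient of an element of `R[s]/(s^{m+1})` -/
def coeffA (R : Type) [CommRing R] (m : ℕ) (c : Amod R m) (j : ℕ) : R :=
  (repA R m c).coeff j

/-- the sum of the `s`-coefficients of an element of `R[s]/(s^{m+1})` -/
def sumCoeffA (R : Type) [CommRing R] (m : ℕ) (c : Amod R m) : R :=
  (repA R m c).eval 1

/-- reduction modulo `s` -/
def redA (R : Type) [CommRing R] (m : ℕ) : Amod R m →+* R :=
  AdjoinRoot.lift (RingHom.id R) 0 (by simp)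

/-- the embedding of `O_m = (R[s]/(s^{m+1}))[t]` into `K_∞^{(m)}`; here `t = u⁻¹`. -/
def OtoK (R : Type) [CommRing R] (m : ℕ) (x : Polynomial (Amod R m)) : Km R m :=
  ∑ k ∈ Finset.range (x.natDegree + 1), HahnSeries.single (-(k : ℤ)) (x.coeff k)

variable {R : Type} [CommRing R] {m : ℕ}

/-- `|α|_m < q^z` -/
def absLt (α : Km R m) (z : ℤ) : Prop := ∀ j : ℤ, j ≤ -z → α.coeff j = 0

/-- `‖α‖_m < q^z` -/
def fracLt (α : Km R m) (z : ℤ) : Prop := ∀ j : ℤ, 1 ≤ j → j ≤ -z → α.coeff j = 0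

/-- `‖α₀‖_0 < q^z`, where `α₀` is the reduction of `α` modulo `s` -/
def fracLtRed (α : Km R m) (z : ℤ) : Prop :=
  ∀ j : ℤ, 1 ≤ j → j ≤ -z → redA R m (α.coeff j) = 0

/-- `|α₀|_0 < q^z`, where `α₀` is the reduction of `α` modulo `s` -/
def absLtRed (α : Km R m) (z : ℤ) : Prop :=
  ∀ j : ℤ, j ≤ -z → redA R m (α.coeff j) = 0

/-- `|x|_m < q^z`, i.e. `deg_t x < z`, for an element of `O_m` -/
def polyDegLt {S : Type} [Semiring S] (x : Polynomial S) (z : ℤ) : Prop :=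
  ∀ k : ℕ, z ≤ (k : ℤ) → x.coeff k = 0

variable (Fq : Type) [Field Fq] [Fintype Fq]

/-- the additive character `e_q(x) = exp(2πi Tr_{F_q/F_p}(x)/p)` -/
def eChar (x : Fq) : ℂ :=
  letI : CharP Fq (ringChar Fq) := ringChar.charP Fq
  letI := ZMod.algebra Fq (ringChar Fq)
  Complex.exp (2 * Real.pi * Complex.I *
    ((Algebra.trace (ZMod (ringChar Fq)) Fq x).val : ℂ) / (ringChar Fq : ℂ))

/-- the additive character `ψ_m` of `K_∞^{(m)}` -/
def psiM (m : ℕ) (α : Km Fq m) : ℂ := eChar Fq (sumCoeffA Fq m (α.coeff 1))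

/-- the form `F(x) = Σ c_{i₁…i_d} x_{i₁} ⋯ x_{i_d}` attached to a coefficient tensor -/
def formOf (K : Type) [CommRing K] (d n : ℕ) (c : (Fin d → Fin n) → K) :
    MvPolynomial (Fin n) K :=
  ∑ idx : Fin d → Fin n, MvPolynomial.C (c idx) * ∏ k, MvPolynomial.X (idx k)

/-- symmetry of a coefficient tensor -/
def SymmetricCoeffs (K : Type) [CommRing K] (d n : ℕ) (c : (Fin d → Fin n) → K) : Prop :=
  ∀ (σ : Equiv.Perm (Fin d)) (idx : Fin d → Fin n), c (idx ∘ σ) = c idx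

/-- a form is nonsingular if its partial derivatives have no common zero other than `0`
over an algebraic closure -/
def Nonsingular (K : Type) [Field K] {n : ℕ} (F : MvPolynomial (Fin n) K) : Prop :=
  ∀ x : Fin n → AlgebraicClosure K,
    (∀ i, MvPolynomial.aeval x (MvPolynomial.pderiv i F) = 0) → x = 0

/-- extend an index tuple `(i₁, …, i_{d-1})` by a last entry `i` -/
def extIdx {d n : ℕ} (idx : Fin (d - 1) → Fin n) (i : Fin n) : Fin d → Fin n :=
  fun k => if h : (k : ℕ) < d - 1 then idx ⟨k, h⟩ else i

/-- the multilinear forms `ψ_i(x⁽¹⁾, …, x⁽ᵈ⁻¹⁾) = d! Σ c_{i₁…i_{d-1} i} x⁽¹⁾_{i₁} ⋯` -/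
def psiForm (K : Type) [CommRing K] (d n : ℕ) (c : (Fin d → Fin n) → K)
    (S : Type) [CommRing S] [Algebra K S] (i : Fin n)
    (x : Fin (d - 1) → Fin n → S) : S :=
  (Nat.factorial d : S) *
    ∑ idx : Fin (d - 1) → Fin n,
      algebraMap K S (c (extIdx idx i)) * ∏ k, x k (idx k)

/-- the exponential sum `S(α)` -/
def Ssum (m e n : ℕ) (F : MvPolynomial (Fin n) Fq) (α : Km Fq m) : ℂ :=
  ∑ᶠ x ∈ {x : Fin n → Polynomial (Amod Fq m) | ∀ i, polyDegLt (x i) ((e : ℤ) + 1)},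
    psiM Fq m (α * OtoK Fq m (MvPolynomial.aeval x F))

/-- the counting function `N_m(e)` -/
def Ncount (m e n : ℕ) (F : MvPolynomial (Fin n) Fq) : ℕ :=
  Nat.card {x : Fin n → Polynomial (Amod Fq m) //
    (∀ i, polyDegLt (x i) ((e : ℤ) + 1)) ∧ MvPolynomial.aeval x F = 0}

/-- the counting function `M_m(α, r₁, r₂)` -/
def Mcount (d n m : ℕ) (c : (Fin d → Fin n) → Fq) (α : Km Fq m) (r1 r2 : ℕ) : ℕ :=
  Nat.card {x : Fin (d - 1) → Fin n → Polynomial (Amod Fq m) //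
    (∀ j i, polyDegLt (x j i) ((r1 : ℤ) - (r2 : ℤ))) ∧
    (∀ i, fracLt (α * OtoK Fq m (psiForm Fq d n c (Polynomial (Amod Fq m)) i x))
      (-(r1 : ℤ) - ((d : ℤ) - 1) * (r2 : ℤ)))}

/-- the counting function `K_m(a, b)` of the shrinking lemma -/
def Kcount (m n : ℕ) (lam : Fin n → Fin n → Km Fq m) (a b : ℤ) : ℕ :=
  Nat.card {x : Fin n → Polynomial (Amod Fq m) //
    (∀ j, polyDegLt (x j) a) ∧
    (∀ i, fracLt (∑ j, lam i j * OtoK Fq m (x j)) (-b))}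

/-- the major arcs `𝔐(J)` -/
def majorArcs (m d e : ℕ) (J : ℤ) : Set (Km Fq m) :=
  {α | absLt α 0 ∧ ∃ r : Polynomial Fq, r.Monic ∧ (r.natDegree : ℤ) ≤ J ∧
    fracLtRed (OtoK Fq m (r.map (algebraMap Fq (Amod Fq m))) * α)
      (J - (d : ℤ) * (e : ℤ) - 1)}

instance (m : ℕ) : Finite (Amod Fq m) := by
  have h : ((X : Polynomial Fq) ^ (m + 1)) ≠ 0 := pow_ne_zero _ X_ne_zero
  have : Module.Finite Fq (Amod Fq m) := (AdjoinRoot.powerBasis h).finite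
  exact Module.finite_of_finite Fq

instance (m : ℕ) : TopologicalSpace (Amod Fq m) := ⊥

instance (m : ℕ) : DiscreteTopology (Amod Fq m) := ⟨rfl⟩

instance (m : ℕ) : IsTopologicalAddGroup (Amod Fq m) where
  continuous_add := continuous_of_discreteTopology
  continuous_neg := continuous_of_discreteTopology

instance (m : ℕ) : MeasurableSpace (ℕ → Amod Fq m) := borel _

instance (m : ℕ) : BorelSpace (ℕ → Amod Fq m) := ⟨rfl⟩

/-- the parametrisation of the unit torus `𝕋^{(m)}` by sequences of coefficients -/
def torusMap (m : ℕ) (f : ℕ → Amod Fq m) : Km Fq m :=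
  HahnSeries.single (1 : ℤ) (1 : Amod Fq m) *
    HahnSeries.ofPowerSeries ℤ (Amod Fq m) (PowerSeries.mk f)

instance (m : ℕ) : MeasurableSpace (Km Fq m) :=
  MeasurableSpace.map (torusMap Fq m) inferInstance

/-- the unit torus as a positive compact set -/
def unitCube (m : ℕ) : TopologicalSpace.PositiveCompacts (ℕ → Amod Fq m) :=
  ⟨⟨Set.univ, isCompact_univ⟩, by rw [interior_univ]; exact Set.univ_nonempty⟩

/-- The Haar measure on `K_∞^{(m)}`, normalised so that the unit torus `𝕋^{(m)}`
has measure `1`.  (All sets whose measure we consider are contained in `𝕋^{(m)}`.) -/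
def muKm (m : ℕ) : Measure (Km Fq m) :=
  (Measure.addHaarMeasure (unitCube Fq m)).map (torusMap Fq m)

end CircleMethod

/-!
The set counted by `K_m(a, b)` is an `𝔽_q`-vector space `V(a, b)`. Lowering the degree bound
by one and raising the precision by one cuts `V(a, b)` down to the kernel of the map
`Θ(x) = (x_i[a-1], L_i(x)[b+1])_i` into `(𝔽_q[s]/(s^{m+1}))^{2n}`, where `x_i[a-1]` is the
coefficient of `t^{a-1}` and `L_i(x)[b+1]` that of `t^{-b-1}`; so it suffices that the image
of `Θ` has dimension at most `(m+1)n`. Since `λ` is symmetric, `Σ x_i L_i(y) = Σ y_i L_i(x)`,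
and for `x, y ∈ V(a, b)` with `a ≤ b + 1` the coefficient of `t^{a-b-2}` of `x_i L_i(y)` is
exactly `x_i[a-1] · L_i(y)[b+1]`. Hence the image of `Θ` is isotropic for the alternating form
`τ(u·v' - u'·v)`, where `τ` reads off the coefficient of `s^m`; this form is nondegenerate, so
an isotropic subspace has at most half the dimension `2(m+1)n`. Iterating `r` times gives the
claim.
-/

open Module Matrix

theorem LinearMap.BilinForm.two_mul_finrank_le_of_le_orthogonal {K V : Type*} [Field K]
    [AddCommGroup V] [Module K V] [FiniteDimensional K V] {B : LinearMap.BilinForm K V}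
    (hB : B.SeparatingLeft) {W : Submodule K V} (hW : W ≤ B.orthogonal W) :
    2 * finrank K W ≤ finrank K V := by
  have h := finrank_add_finrank_orthogonal' (B := B) W
  rw [LinearMap.separatingLeft_iff_ker_eq_bot.1 hB, inf_bot_eq, finrank_bot, add_zero] at h
  have := Submodule.finrank_mono hW
  omega

theorem Submodule.finrank_map_add_finrank_inf_ker {K V W : Type*} [Field K]
    [AddCommGroup V] [Module K V] [AddCommGroup W] [Module K W] (p : Submodule K V)
    [FiniteDimensional K p] (f : V →ₗ[K] W) :
    finrank K (p.map f) + finrank K (p ⊓ LinearMap.ker f : Submodule K V) = finrank K p := by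
  have hker : LinearMap.ker (f.domRestrict p) ≃ₗ[K] (p ⊓ LinearMap.ker f : Submodule K V) :=
    (LinearEquiv.ofEq _ _ (by rw [LinearMap.ker_domRestrict, Submodule.comap_inf,
      Submodule.comap_subtype_self, top_inf_eq])).trans
      (Submodule.comapSubtypeEquivOfLe inf_le_left)
  rw [← LinearMap.range_domRestrict, ← hker.finrank_eq]
  exact LinearMap.finrank_range_add_finrank_ker _

section DotSymplectic

variable {K A : Type*} [Field K] [CommRing A] [Algebra K A] (τ : A →ₗ[K] K)
  (ι : Type*) [Fintype ι]

def dotSymplectic : LinearMap.BilinForm K ((ι → A) × (ι → A)) :=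
  LinearMap.mk₂ K (fun e e' => τ (e.1 ⬝ᵥ e'.2 - e'.1 ⬝ᵥ e.2))
    (fun e f e' => by
      simp only [Prod.fst_add, Prod.snd_add, add_dotProduct, dotProduct_add, map_sub, map_add]
      ring)
    (fun c e e' => by
      simp only [Prod.smul_fst, Prod.smul_snd, smul_dotProduct, dotProduct_smul, ← smul_sub,
        map_smul, smul_eq_mul])
    (fun e e' f' => by
      simp only [Prod.fst_add, Prod.snd_add, add_dotProduct, dotProduct_add, map_sub, map_add]
      ring)
    (fun c e e' => by
      simp only [Prod.smul_fst, Prod.smul_snd, smul_dotProduct, dotProduct_smul, ← smul_sub,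
        map_smul, smul_eq_mul])

variable {τ ι}

theorem dotSymplectic_apply (e e' : (ι → A) × (ι → A)) :
    dotSymplectic τ ι e e' = τ (e.1 ⬝ᵥ e'.2 - e'.1 ⬝ᵥ e.2) := rfl

theorem separatingLeft_dotSymplectic [DecidableEq ι] (hτ : ∀ u ≠ 0, ∃ w, τ (u * w) ≠ 0) :
    (dotSymplectic τ ι).SeparatingLeft := by
  intro e he
  by_contra hne
  obtain ⟨i, hi⟩ : ∃ i, e.1 i ≠ 0 ∨ e.2 i ≠ 0 := by
    by_contra! h
    exact hne (Prod.ext (funext fun i => (h i).1) (funext fun i => (h i).2))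
  rcases hi with hi | hi
  · obtain ⟨w, hw⟩ := hτ _ hi
    exact hw (by simpa [dotSymplectic_apply] using he (0, Pi.single i w))
  · obtain ⟨w, hw⟩ := hτ _ hi
    exact hw (by simpa [dotSymplectic_apply, mul_comm] using he (Pi.single i w, 0))

theorem finrank_le_of_dotProduct_comm [FiniteDimensional K A]
    (hτ : ∀ u ≠ 0, ∃ w, τ (u * w) ≠ 0) {I : Submodule K ((ι → A) × (ι → A))}
    (hI : ∀ e ∈ I, ∀ e' ∈ I, e.1 ⬝ᵥ e'.2 = e'.1 ⬝ᵥ e.2) :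
    finrank K I ≤ Fintype.card ι * finrank K A := by
  classical
  have h := LinearMap.BilinForm.two_mul_finrank_le_of_le_orthogonal
    (separatingLeft_dotSymplectic (ι := ι) hτ) (W := I)
    fun e' he' e he => by rw [dotSymplectic_apply, hI e he e' he', sub_self, map_zero]
  rw [finrank_prod, finrank_pi_fintype] at h
  simp only [Finset.sum_const, Finset.card_univ, smul_eq_mul] at h
  omega

end DotSymplectic

namespace CircleMethod

section TopCoeff

variable (R : Type) [CommRing R] (m : ℕ)

def topCoeff : Amod R m →ₗ[R] R :=
  (lcoeff R m).comp (AdjoinRoot.modByMonicHom (monic_X_pow (m + 1)))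

variable {R m} [Nontrivial R]

theorem topCoeff_mk_of_natDegree_le {p : R[X]} (hp : p.natDegree ≤ m) :
    topCoeff R m (AdjoinRoot.mk _ p) = p.coeff m := by
  rw [topCoeff, LinearMap.comp_apply, AdjoinRoot.modByMonicHom_mk,
    (modByMonic_eq_self_iff (monic_X_pow _)).2, lcoeff_apply]
  rw [degree_X_pow]
  exact degree_le_natDegree.trans_lt (by exact_mod_cast Nat.lt_succ_of_le hp)

theorem exists_topCoeff_mul_ne_zero {u : Amod R m} (hu : u ≠ 0) :
    ∃ w, topCoeff R m (u * w) ≠ 0 := by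
  obtain ⟨f, rfl⟩ := AdjoinRoot.mk_surjective u
  set p := f %ₘ X ^ (m + 1)
  have hfp : AdjoinRoot.mk (X ^ (m + 1)) f = AdjoinRoot.mk _ p := by
    conv_lhs => rw [← AdjoinRoot.mk_leftInverse (monic_X_pow (m + 1)) (AdjoinRoot.mk _ f)]
    rw [AdjoinRoot.modByMonicHom_mk]
  have hp0 : p ≠ 0 := by rintro h; exact hu (by rw [hfp, h, map_zero])
  have hpm : p.natDegree ≤ m := by
    have := degree_modByMonic_lt f (monic_X_pow (m + 1))
    rw [degree_X_pow, ← natDegree_lt_iff_degree_lt hp0] at this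
    omega
  obtain ⟨j, hj⟩ : ∃ j, m = p.natDegree + j := ⟨m - p.natDegree, by omega⟩
  refine ⟨AdjoinRoot.mk _ (X ^ j), ?_⟩
  rw [hfp, ← map_mul, topCoeff_mk_of_natDegree_le, hj, coeff_mul_X_pow]
  · exact leadingCoeff_ne_zero.2 hp0
  · exact natDegree_mul_le.trans (by rw [natDegree_X_pow]; omega)

theorem finrank_Amod : finrank R (Amod R m) = m + 1 := by
  rw [(AdjoinRoot.powerBasis' (monic_X_pow (m + 1))).finrank, AdjoinRoot.powerBasis'_dim,
    natDegree_X_pow]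

end TopCoeff

section OtoK

variable {R : Type} [CommRing R] {m : ℕ}

theorem coeff_OtoK_neg_natCast (p : Polynomial (Amod R m)) (k : ℕ) :
    (OtoK R m p).coeff (-k) = p.coeff k := by
  rw [OtoK, HahnSeries.coeff_sum]
  rcases lt_or_ge p.natDegree k with hk | hk
  · rw [coeff_eq_zero_of_natDegree_lt hk]
    exact Finset.sum_eq_zero fun j hj => by
      rw [HahnSeries.coeff_single, if_neg (by have := Finset.mem_range.1 hj; omega)]
  · rw [Finset.sum_eq_single_of_mem k (Finset.mem_range.2 (by omega)) fun j _ hj => by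
      rw [HahnSeries.coeff_single, if_neg (by omega)]]
    simp

theorem coeff_OtoK_of_pos (p : Polynomial (Amod R m)) {g : ℤ} (hg : 0 < g) :
    (OtoK R m p).coeff g = 0 := by
  rw [OtoK, HahnSeries.coeff_sum]
  exact Finset.sum_eq_zero fun j _ => by rw [HahnSeries.coeff_single, if_neg (by omega)]

theorem coeff_OtoK (p : Polynomial (Amod R m)) (g : ℤ) :
    (OtoK R m p).coeff g = if g ≤ 0 then p.coeff (-g).toNat else 0 := by
  split_ifs with hg
  · rw [← coeff_OtoK_neg_natCast]; congr 1; omega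
  · exact coeff_OtoK_of_pos p (by omega)

theorem OtoK_add (p p' : Polynomial (Amod R m)) :
    OtoK R m (p + p') = OtoK R m p + OtoK R m p' := by
  ext g
  simp only [HahnSeries.coeff_add, coeff_OtoK, coeff_add]
  split_ifs <;> simp

theorem OtoK_smul {S : Type*} [SMulZeroClass S (Amod R m)] (c : S) (p : Polynomial (Amod R m)) :
    OtoK R m (c • p) = c • OtoK R m p := by
  ext g
  simp only [HahnSeries.coeff_smul, coeff_OtoK, coeff_smul]
  split_ifs <;> simp

theorem OtoK_eq_sum_range {p : Polynomial (Amod R m)} {T : ℕ} (hp : polyDegLt p T) :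
    OtoK R m p = ∑ k ∈ Finset.range T, HahnSeries.single (-(k : ℤ)) (p.coeff k) := by
  have hvanish : ∀ k, (T ≤ k ∨ p.natDegree < k) →
      HahnSeries.single (-(k : ℤ)) (p.coeff k) = 0 := by
    rintro k (hk | hk) <;> refine HahnSeries.single_eq_zero_iff.2 ?_
    · exact hp k (by exact_mod_cast hk)
    · exact coeff_eq_zero_of_natDegree_lt hk
  rw [OtoK, Finset.sum_subset (Finset.range_subset_range.2 (le_max_left _ T)),
    ← Finset.sum_subset (Finset.range_subset_range.2 (le_max_right (p.natDegree + 1) T))]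
  all_goals exact fun k _ hk => hvanish k (by rw [Finset.mem_range] at hk; omega)

theorem coeff_OtoK_mul {p : Polynomial (Amod R m)} {N : ℕ} (hp : polyDegLt p (N + 1))
    {β : Km R m} {g : ℤ} (hβ : ∀ k < N, β.coeff (g + k) = 0) :
    (OtoK R m p * β).coeff g = p.coeff N * β.coeff (g + N) := by
  rw [OtoK_eq_sum_range (T := N + 1) (by exact_mod_cast hp), Finset.sum_mul,
    HahnSeries.coeff_sum, Finset.sum_range_succ, Finset.sum_eq_zero, zero_add]
  · rw [HahnSeries.coeff_single_mul, sub_neg_eq_add]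
  · intro k hk
    rw [HahnSeries.coeff_single_mul, sub_neg_eq_add, hβ k (Finset.mem_range.1 hk), mul_zero]

end OtoK

theorem polyDegLt_natCast_iff {S : Type} [Semiring S] (p : Polynomial S) (c : ℕ) :
    polyDegLt p c ↔ polyDegLt p ((c + 1 : ℕ) : ℤ) ∧ p.coeff c = 0 := by
  refine ⟨fun h => ⟨fun k hk => h k (by omega), h c le_rfl⟩, fun ⟨h, hc⟩ k hk => ?_⟩
  rcases eq_or_lt_of_le hk with heq | hlt
  · rwa [← Nat.cast_inj.1 heq]
  · exact h k (by omega)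

theorem fracLt_neg_natCast_succ_iff {R : Type} [CommRing R] {m : ℕ} (α : Km R m) (e : ℕ) :
    fracLt α (-((e + 1 : ℕ) : ℤ)) ↔
      fracLt α (-(e : ℤ)) ∧ α.coeff ((e + 1 : ℕ) : ℤ) = 0 := by
  refine ⟨fun h => ⟨fun j hj hj' => h j hj (by omega), h _ (by omega) (by omega)⟩,
    fun ⟨h, he⟩ j hj hj' => ?_⟩
  rcases eq_or_lt_of_le (show j ≤ ((e + 1 : ℕ) : ℤ) by omega) with rfl | hlt
  · exact he
  · exact h j hj (by omega)

section SolutionSpace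

variable {R : Type} [CommRing R] {m n : ℕ} (lam : Matrix (Fin n) (Fin n) (Km R m))

theorem smul_eq_C_mul (c : R) (α : Km R m) :
    c • α = HahnSeries.C (algebraMap R (Amod R m) c) * α := by
  rw [HahnSeries.C_mul_eq_smul]
  ext g
  rw [HahnSeries.coeff_smul, HahnSeries.coeff_smul, smul_eq_mul, Algebra.smul_def]

/- Instance search does not reach this through `Algebra R (Km R m)`, whose scalar action is not
reducibly the coefficientwise one. -/
instance : SMulCommClass R (Km R m) (Km R m) :=
  ⟨fun c x y => by simp only [smul_eq_C_mul, smul_eq_mul, mul_left_comm]⟩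

def linearForms : (Fin n → Polynomial (Amod R m)) →ₗ[R] Fin n → Km R m where
  toFun x := lam *ᵥ (OtoK R m ∘ x)
  map_add' x y := by
    rw [← mulVec_add]
    exact congrArg _ (funext fun j => OtoK_add _ _)
  map_smul' c x := by
    rw [RingHom.id_apply, ← mulVec_smul]
    exact congrArg _ (funext fun j => OtoK_smul _ _)

theorem linearForms_apply (x : Fin n → Polynomial (Amod R m)) :
    linearForms lam x = lam *ᵥ (OtoK R m ∘ x) := rfl

def solutionSpace (a b : ℤ) : Submodule R (Fin n → Polynomial (Amod R m)) where
  carrier := {x | (∀ j, polyDegLt (x j) a) ∧ ∀ i, fracLt (linearForms lam x i) (-b)}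
  zero_mem' := ⟨fun j k _ => coeff_zero k, fun i j _ _ => by rw [map_zero]; rfl⟩
  add_mem' := by
    rintro x y ⟨hx, hLx⟩ ⟨hy, hLy⟩
    refine ⟨fun j k hk => ?_, fun i j hj hj' => ?_⟩
    · rw [Pi.add_apply, coeff_add, hx j k hk, hy j k hk, add_zero]
    · rw [map_add, Pi.add_apply, HahnSeries.coeff_add, hLx i j hj hj', hLy i j hj hj', add_zero]
  smul_mem' := by
    rintro c x ⟨hx, hLx⟩
    refine ⟨fun j k hk => ?_, fun i j hj hj' => ?_⟩
    · rw [Pi.smul_apply, coeff_smul, hx j k hk, smul_zero]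
    · rw [map_smul, Pi.smul_apply, HahnSeries.coeff_smul, hLx i j hj hj', smul_zero]

def boundaryCoeffs (c e : ℕ) :
    (Fin n → Polynomial (Amod R m)) →ₗ[R] (Fin n → Amod R m) × (Fin n → Amod R m) where
  toFun x := (fun i => (x i).coeff c, fun i => (linearForms lam x i).coeff e)
  map_add' x y := by
    ext i <;> simp only [map_add, Pi.add_apply, coeff_add, HahnSeries.coeff_add, Prod.fst_add,
      Prod.snd_add]
  map_smul' r x := by
    ext i <;> simp only [map_smul, Pi.smul_apply, coeff_smul, HahnSeries.coeff_smul,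
      Prod.smul_fst, Prod.smul_snd, RingHom.id_apply]

theorem solutionSpace_natCast_succ (c e : ℕ) :
    solutionSpace lam c ((e + 1 : ℕ) : ℤ) =
      solutionSpace lam ((c + 1 : ℕ) : ℤ) e ⊓
        LinearMap.ker (boundaryCoeffs lam c (e + 1)) := by
  ext x
  rw [Submodule.mem_inf, LinearMap.mem_ker]
  change (_ ∧ _) ↔ (_ ∧ _) ∧ _
  simp only [polyDegLt_natCast_iff _ c, fracLt_neg_natCast_succ_iff _ e, forall_and,
    boundaryCoeffs, LinearMap.coe_mk, AddHom.coe_mk, Prod.ext_iff, funext_iff, Prod.fst_zero,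
    Prod.snd_zero, Pi.zero_apply]
  tauto

variable {lam}

/- `x_i` has degree at most `c` and `L_i(y)` has no terms `t^{-1}, …, t^{-e}`, so only
`x_i[c] · L_i(y)[e+1]` contributes to this coefficient. -/
theorem coeff_dotProduct_linearForms {c e : ℕ} (hce : c ≤ e)
    {x y : Fin n → Polynomial (Amod R m)}
    (hx : ∀ j, polyDegLt (x j) ((c + 1 : ℕ) : ℤ))
    (hy : ∀ i, fracLt (linearForms lam y i) (-(e : ℤ))) :
    ((OtoK R m ∘ x) ⬝ᵥ linearForms lam y).coeff ((e : ℤ) + 1 - c) =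
      (boundaryCoeffs lam c (e + 1) x).1 ⬝ᵥ (boundaryCoeffs lam c (e + 1) y).2 := by
  simp only [dotProduct, HahnSeries.coeff_sum, Function.comp_apply]
  refine Finset.sum_congr rfl fun i _ => ?_
  rw [coeff_OtoK_mul (hx i) fun k hk => hy i _ (by omega) (by omega)]
  congr 2
  push_cast
  ring

theorem boundaryCoeffs_dotProduct_comm (hlam : lam.IsSymm) {c e : ℕ} (hce : c ≤ e)
    {x y : Fin n → Polynomial (Amod R m)} (hx : x ∈ solutionSpace lam ((c + 1 : ℕ) : ℤ) e)
    (hy : y ∈ solutionSpace lam ((c + 1 : ℕ) : ℤ) e) :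
    (boundaryCoeffs lam c (e + 1) x).1 ⬝ᵥ (boundaryCoeffs lam c (e + 1) y).2 =
      (boundaryCoeffs lam c (e + 1) y).1 ⬝ᵥ (boundaryCoeffs lam c (e + 1) x).2 := by
  rw [← coeff_dotProduct_linearForms hce hx.1 hy.2,
    ← coeff_dotProduct_linearForms hce hy.1 hx.2,
    linearForms_apply, linearForms_apply, dotProduct_mulVec, ← mulVec_transpose, hlam.eq,
    dotProduct_comm]

end SolutionSpace

section Counting

variable {Fq : Type} [Field Fq] {m n : ℕ}

theorem Kcount_eq_natCard_solutionSpace (lam : Fin n → Fin n → Km Fq m) (a b : ℤ) :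
    Kcount Fq m n lam a b = Nat.card (solutionSpace (of lam) a b) := rfl

variable [Fintype Fq]

instance (lam : Matrix (Fin n) (Fin n) (Km Fq m)) (a b : ℤ) : Finite (solutionSpace lam a b) := by
  refine Finite.of_injective (fun x (j : Fin n) (k : Fin a.toNat) => (x.1 j).coeff k) ?_
  rintro ⟨x, hx, _⟩ ⟨y, hy, _⟩ hxy
  refine Subtype.ext (funext fun j => Polynomial.ext fun k => ?_)
  rcases lt_or_ge k a.toNat with hk | hk
  · exact congrFun (congrFun hxy j) ⟨k, hk⟩
  · rw [hx j k (by omega), hy j k (by omega)]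

theorem natCard_solutionSpace (lam : Matrix (Fin n) (Fin n) (Km Fq m)) (a b : ℤ) :
    Nat.card (solutionSpace lam a b) = Fintype.card Fq ^ finrank Fq (solutionSpace lam a b) := by
  rw [Module.natCard_eq_pow_finrank (K := Fq), Nat.card_eq_fintype_card]

variable {lam : Matrix (Fin n) (Fin n) (Km Fq m)}

theorem finrank_solutionSpace_le (hlam : lam.IsSymm) {c e : ℕ} (hce : c ≤ e) :
    finrank Fq (solutionSpace lam ((c + 1 : ℕ) : ℤ) e) ≤
      (m + 1) * n + finrank Fq (solutionSpace lam c ((e + 1 : ℕ) : ℤ)) := by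
  have hsplit := Submodule.finrank_map_add_finrank_inf_ker
    (solutionSpace lam ((c + 1 : ℕ) : ℤ) e) (boundaryCoeffs lam c (e + 1))
  have himage := finrank_le_of_dotProduct_comm (fun _ => exists_topCoeff_mul_ne_zero)
    (I := (solutionSpace lam ((c + 1 : ℕ) : ℤ) e).map (boundaryCoeffs lam c (e + 1))) (by
      rintro _ ⟨x, hx, rfl⟩ _ ⟨y, hy, rfl⟩
      exact boundaryCoeffs_dotProduct_comm hlam hce hx hy)
  rw [Fintype.card_fin, finrank_Amod] at himage
  rw [← solutionSpace_natCast_succ] at hsplit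
  linarith

theorem finrank_solutionSpace_le_add (hlam : lam.IsSymm) (c k e : ℕ) (hce : c + k ≤ e + 1) :
    finrank Fq (solutionSpace lam ((c + k : ℕ) : ℤ) e) ≤
      (m + 1) * n * k + finrank Fq (solutionSpace lam c ((e + k : ℕ) : ℤ)) := by
  induction k generalizing e with
  | zero => simp
  | succ k ih =>
    have hstep := finrank_solutionSpace_le hlam (c := c + k) (e := e) (by omega)
    have hrest := ih (e + 1) (by omega)
    rw [show e + 1 + k = e + (k + 1) by omega] at hrest
    rw [← add_assoc]
    linarith

end Counting

end CircleMethod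

open CircleMethod in
theorem stmt8_general (Fq : Type) [Field Fq] [Fintype Fq] (m n : ℕ)
    (lam : Fin n → Fin n → Km Fq m) (hlam : ∀ i j, lam i j = lam j i)
    (a b r : ℕ) (hab : a ≤ b) (hr : r < a) :
    Kcount Fq m n lam (a : ℤ) (b : ℤ) ≤
      Fintype.card Fq ^ ((m + 1) * n * r) *
        Kcount Fq m n lam ((a : ℤ) - (r : ℤ)) ((b : ℤ) + (r : ℤ)) := by
  obtain ⟨c, rfl⟩ : ∃ c, a = c + r := ⟨a - r, by omega⟩
  have hrank :=
    finrank_solutionSpace_le_add (Matrix.IsSymm.ext fun i j => hlam j i) c r b (by omega)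
  rw [Kcount_eq_natCard_solutionSpace, Kcount_eq_natCard_solutionSpace, natCard_solutionSpace,
    natCard_solutionSpace, ← pow_add, ← Nat.cast_add,
    show ((c + r : ℕ) : ℤ) - r = c by push_cast; ring]
  exact Nat.pow_le_pow_right Fintype.card_pos hrank

open CircleMethod in
/-- Lemma 4.3 (Davenport shrinking): if `L_1, …, L_n` are linear forms over `K_∞^{(m)}`
with symmetric coefficient matrix `λ`, and
`K_m(a,b) = #{x ∈ 𝒪_m^n : |x|_m < q^a, ‖L_i(x)‖_m < q^{-b} (1 ≤ i ≤ n)}`, then for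
`0 ≤ r < a ≤ b` (with `a, b ≥ 1`) one has `K_m(a,b) ≤ q^{(m+1)nr} K_m(a-r, b+r)`. -/
theorem stmt8 (Fq : Type) [Field Fq] [Fintype Fq] (m n : ℕ)
    (lam : Fin n → Fin n → Km Fq m) (hlam : ∀ i j, lam i j = lam j i)
    (a b r : ℕ) (ha : 1 ≤ a) (hb : 1 ≤ b) (hab : a ≤ b) (hr : r < a) :
    Kcount Fq m n lam (a : ℤ) (b : ℤ) ≤
      Fintype.card Fq ^ ((m + 1) * n * r) *
        Kcount Fq m n lam ((a : ℤ) - (r : ℤ)) ((b : ℤ) + (r : ℤ)) :=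
  stmt8_general Fq m n lam hlam a b r hab hr
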